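/- If u₁, …, u_k and v₁, …, v_k are words over an alphabet Σ with concatenations U = u₁⋯u_k and V = v₁⋯v_k, then U = V if and only if ρ(U) + ρ̄(V) = 1, where ρ, ρ̄ are the binary encodings with end marker (assuming all uᵢ, vᵢ are over {A,B} and k ≥ 1 with U, V nonempty). -/

import Mathlib

/-! Since `θ + θbar = 1` letterwise, `rho θ w + rho θbar w = 1` for every word `w`, so the condition
`rho θ U + rho θbar V = 1` says `rho θ U = rho θ V`. The end marker makes `rho θ` injective:
`rho θ (a :: w) = θ a / 2 + rho θ w / 2` with `rho θ w ∈ (0, 1)`, so the first letter is read off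
from which half of `(0, 1)` the value lies in, and `rho θ [] = 1 / 2` lies in neither. -/

/-- The end-marked binary encoding of a word over a two-element alphabet. -/
noncomputable def rho (θ : Bool → ℝ) (w : List Bool) : ℝ :=
  (∑ i : Fin w.length, θ (w.get i) * (1 / 2 : ℝ) ^ (i.val + 1)) + (1 / 2 : ℝ) ^ (w.length + 1)

open Set

lemma rho_nil (θ : Bool → ℝ) : rho θ [] = 1 / 2 := by
  simp [rho]

lemma rho_cons (θ : Bool → ℝ) (a : Bool) (w : List Bool) :
    rho θ (a :: w) = θ a / 2 + rho θ w / 2 := by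
  have shift : ∀ i : Fin w.length,
      θ ((a :: w).get i.succ) * (1 / 2 : ℝ) ^ (i.succ.val + 1)
        = θ (w.get i) * (1 / 2 : ℝ) ^ (i.val + 1) * (1 / 2) := by
    intro i
    simp only [List.get_eq_getElem, Fin.val_succ, List.getElem_cons_succ, pow_succ]
    ring
  simp only [rho, List.length_cons, Fin.sum_univ_succ]
  rw [Finset.sum_congr rfl (fun i _ => shift i), ← Finset.sum_mul]
  simp only [List.get_eq_getElem, List.length_cons, Fin.coe_ofNat_eq_mod, Nat.zero_mod,
    List.getElem_cons_zero, one_div, zero_add, pow_succ, pow_zero, one_mul, inv_pow]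
  ring

lemma rho_add_rho_eq_one {θ θbar : Bool → ℝ} (hsum : ∀ x, θ x + θbar x = 1)
    (w : List Bool) : rho θ w + rho θbar w = 1 := by
  induction w with
  | nil => rw [rho_nil, rho_nil]; norm_num
  | cons a w ih => rw [rho_cons, rho_cons]; linarith [hsum a]

section ZeroOne

variable {θ : Bool → ℝ} (hθ : ∀ x, θ x = 0 ∨ θ x = 1)
include hθ

lemma rho_mem_Ioo (w : List Bool) : rho θ w ∈ Ioo 0 1 := by
  induction w with
  | nil => rw [rho_nil]; norm_num
  | cons a w ih =>
    rw [rho_cons]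
    obtain ⟨h0, h1⟩ := ih
    constructor <;> rcases hθ a with ha | ha <;> rw [ha] <;> linarith

lemma rho_cons_ne_rho_nil (a : Bool) (w : List Bool) : rho θ (a :: w) ≠ rho θ [] := by
  obtain ⟨h0, h1⟩ := rho_mem_Ioo hθ w
  rw [rho_cons, rho_nil]
  rcases hθ a with ha | ha <;> rw [ha] <;> intro h <;> linarith

lemma rho_injective (hinj : Function.Injective θ) : Function.Injective (rho θ) := by
  intro w₁
  induction w₁ with
  | nil =>
    rintro (_ | ⟨b, w₂⟩) h
    · rfl
    · exact absurd h.symm (rho_cons_ne_rho_nil hθ b w₂)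
  | cons a w₁ ih =>
    rintro (_ | ⟨b, w₂⟩) h
    · exact absurd h (rho_cons_ne_rho_nil hθ a w₁)
    rw [rho_cons, rho_cons] at h
    obtain ⟨h₁0, h₁1⟩ := rho_mem_Ioo hθ w₁
    obtain ⟨h₂0, h₂1⟩ := rho_mem_Ioo hθ w₂
    -- `θ a - θ b = rho θ w₂ - rho θ w₁` lies in `(-1, 1)` and in `{-1, 0, 1}`.
    have hab : θ a = θ b := by
      rcases hθ a with ha | ha <;> rcases hθ b with hb | hb <;> rw [ha, hb] at h ⊢ <;>
        first | rfl | linarith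
    obtain rfl := hinj hab
    rw [ih (by linarith : rho θ w₁ = rho θ w₂)]

end ZeroOne

lemma eq_iff_rho_add_rho_eq_one {θ θbar : Bool → ℝ} (hθ : ∀ x, θ x = 0 ∨ θ x = 1)
    (hsum : ∀ x, θ x + θbar x = 1) (hinj : Function.Injective θ) (u v : List Bool) :
    u = v ↔ rho θ u + rho θbar v = 1 := by
  refine ⟨fun h => h ▸ rho_add_rho_eq_one hsum u, fun h => rho_injective hθ hinj ?_⟩
  linarith [rho_add_rho_eq_one hsum v]

theorem stmt_7_general (θ θbar : Bool → ℝ)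
    (hθ : ∀ x, θ x = 0 ∨ θ x = 1)
    (hsum : ∀ x, θ x + θbar x = 1) (hinj : θ true ≠ θ false)
    (k : ℕ) (us vs : Fin k → List Bool) :
    (List.ofFn us).flatten = (List.ofFn vs).flatten ↔
      rho θ (List.ofFn us).flatten + rho θbar (List.ofFn vs).flatten = 1 :=
  eq_iff_rho_add_rho_eq_one hθ hsum (Bool.injective_iff.2 hinj.symm) _ _

theorem stmt_7 (θ θbar : Bool → ℝ)
    (hθ : ∀ x, θ x = 0 ∨ θ x = 1) (hθbar : ∀ x, θbar x = 0 ∨ θbar x = 1)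
    (hsum : ∀ x, θ x + θbar x = 1) (hinj : θ true ≠ θ false)
    (k : ℕ) (hk : 1 ≤ k) (us vs : Fin k → List Bool)
    (hU : (List.ofFn us).flatten ≠ []) (hV : (List.ofFn vs).flatten ≠ []) :
    (List.ofFn us).flatten = (List.ofFn vs).flatten ↔
      rho θ (List.ofFn us).flatten + rho θbar (List.ofFn vs).flatten = 1 :=
  stmt_7_general θ θbar hθ hsum hinj k us vs
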